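/- For every simple graph G, one has q₂(G) ≥ λ₂(G) + δ(G), where λ₂(G) is the second largest eigenvalue of the adjacency matrix of G and δ(G) is the minimum vertex degree of G. -/

import Mathlib

open Matrix SimpleGraph
open scoped Classical

/-- The `k`-th largest eigenvalue (1-indexed, counted with multiplicity) of a real
symmetric (Hermitian) matrix; junk value `0` if `M` is not Hermitian or `k` is out of range. -/
noncomputable def kthEig {V : Type*} [Fintype V] [DecidableEq V]
    (M : Matrix V V ℝ) (k : ℕ) : ℝ :=
  if hM : M.IsHermitian then
    if h : k - 1 < Fintype.card V then
      letI f : Fin (Fintype.card V) → ℝ := hM.eigenvalues ∘ (Fintype.equivFin V).symm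
      (f ∘ Tuple.sort f) (Fin.rev ⟨k - 1, h⟩)
    else 0
  else 0

/-- The signless Laplacian `Q(G) = D(G) + A(G)` of a simple graph `G`. -/
noncomputable def signlessLap {V : Type*} [Fintype V] [DecidableEq V]
    (G : SimpleGraph V) [DecidableRel G.Adj] : Matrix V V ℝ :=
  G.degMatrix ℝ + G.adjMatrix ℝ

/-- `qEig G k` is the `k`-th largest signless Laplacian eigenvalue `q_k(G)`. -/
noncomputable def qEig {V : Type*} [Fintype V] [DecidableEq V]
    (G : SimpleGraph V) [DecidableRel G.Adj] (k : ℕ) : ℝ :=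
  kthEig (signlessLap G) k

/-- `c` is a bipartite connected component of `H`: the vertex set of the component splits
into two disjoint classes `U`, `W` such that every edge of the component joins `U` and `W`. -/
def IsBipartiteComponent {V : Type*} (H : SimpleGraph V) (c : H.ConnectedComponent) : Prop :=
  ∃ U W : Set V, U ∪ W = c.supp ∧ Disjoint U W ∧
    ∀ ⦃u v : V⦄, u ∈ c.supp → H.Adj u v → (u ∈ U ∧ v ∈ W) ∨ (u ∈ W ∧ v ∈ U)

/-- `c` is a balanced bipartite connected component of `H`: bipartite with vertex classes
of equal size. -/
def IsBalancedBipartiteComponent {V : Type*} (H : SimpleGraph V)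
    (c : H.ConnectedComponent) : Prop :=
  ∃ U W : Set V, U ∪ W = c.supp ∧ Disjoint U W ∧ U.ncard = W.ncard ∧
    ∀ ⦃u v : V⦄, u ∈ c.supp → H.Adj u v → (u ∈ U ∧ v ∈ W) ∨ (u ∈ W ∧ v ∈ U)

/-- `G` is the complete multipartite graph whose parts are the fibers of `p`:
two vertices are adjacent iff they lie in different parts. -/
def IsCompleteMultipartiteWith {V ι : Type*} (G : SimpleGraph V) (p : V → ι) : Prop :=
  ∀ u v : V, G.Adj u v ↔ p u ≠ p v

/-! Weyl's monotonicity principle: `Q(G) = A(G) + D(G)` with `xᵀ D(G) x ≥ δ(G) ‖x‖²`, so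
each eigenvalue of `Q(G)` is at least the eigenvalue of `A(G)` of the same rank plus `δ(G)`.
For rank `k`, a dimension count gives a nonzero `x` orthogonal to the eigenvectors of `A` of
rank `> k` and to those of `Q` of rank `< k`; its Rayleigh quotient is then `≥ λₖ(A)` for `A`
and `≤ qₖ` for `Q`. -/

open RCLike

lemma exists_ne_zero_forall_inner_eq_zero_of_card_lt {𝕜 E : Type*} [RCLike 𝕜]
    [NormedAddCommGroup E] [InnerProductSpace 𝕜 E] [FiniteDimensional 𝕜 E] (s : Finset E)
    (hs : s.card < Module.finrank 𝕜 E) : ∃ x ≠ (0 : E), ∀ v ∈ s, inner 𝕜 v x = 0 := by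
  set K := Submodule.span 𝕜 (s : Set E)
  have hK : Module.finrank 𝕜 K ≤ s.card := finrank_span_finset_le_card s
  have hKperp : Kᗮ ≠ ⊥ := by
    intro h
    have := K.finrank_add_finrank_orthogonal
    rw [h, finrank_bot] at this
    omega
  obtain ⟨x, hxK, hx0⟩ := Submodule.exists_mem_ne_zero_of_ne_bot hKperp
  exact ⟨x, hx0, fun v hv => (Submodule.mem_orthogonal K x).mp hxK v (Submodule.subset_span hv)⟩

namespace LinearMap.IsSymmetric

variable {𝕜 E : Type*} [RCLike 𝕜] [NormedAddCommGroup E] [InnerProductSpace 𝕜 E]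
  [FiniteDimensional 𝕜 E] {S T : E →ₗ[𝕜] E} {n : ℕ}

lemma re_inner_apply_self_eq_sum (hT : T.IsSymmetric) (hn : Module.finrank 𝕜 E = n) (x : E) :
    re (inner 𝕜 (T x) x) =
      ∑ i, hT.eigenvalues hn i * ‖inner 𝕜 (hT.eigenvectorBasis hn i) x‖ ^ 2 := by
  rw [← (hT.eigenvectorBasis hn).sum_inner_mul_inner, map_sum]
  congr 1 with i
  rw [hT, apply_eigenvectorBasis, inner_smul_right, mul_assoc, ← inner_conj_symm x,
    RCLike.conj_mul, ← ofReal_pow, ← ofReal_mul, ofReal_re]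

lemma re_inner_apply_self_le_of_forall_lt (hT : T.IsSymmetric) (hn : Module.finrank 𝕜 E = n)
    {k : Fin n} {x : E} (hx : ∀ i < k, inner 𝕜 (hT.eigenvectorBasis hn i) x = 0) :
    re (inner 𝕜 (T x) x) ≤ hT.eigenvalues hn k * ‖x‖ ^ 2 := by
  rw [hT.re_inner_apply_self_eq_sum hn, ← (hT.eigenvectorBasis hn).sum_sq_norm_inner_right,
    Finset.mul_sum]
  refine Finset.sum_le_sum fun i _ => ?_
  rcases lt_or_ge i k with hik | hki
  · simp [hx i hik]
  · exact mul_le_mul_of_nonneg_right (hT.eigenvalues_antitone hn hki) (by positivity)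

lemma le_re_inner_apply_self_of_forall_gt (hT : T.IsSymmetric) (hn : Module.finrank 𝕜 E = n)
    {k : Fin n} {x : E} (hx : ∀ i, k < i → inner 𝕜 (hT.eigenvectorBasis hn i) x = 0) :
    hT.eigenvalues hn k * ‖x‖ ^ 2 ≤ re (inner 𝕜 (T x) x) := by
  rw [hT.re_inner_apply_self_eq_sum hn, ← (hT.eigenvectorBasis hn).sum_sq_norm_inner_right,
    Finset.mul_sum]
  refine Finset.sum_le_sum fun i _ => ?_
  rcases lt_or_ge k i with hki | hik
  · simp [hx i hki]
  · exact mul_le_mul_of_nonneg_right (hT.eigenvalues_antitone hn hik) (by positivity)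

theorem eigenvalues_add_le_eigenvalues (hS : S.IsSymmetric) (hT : T.IsSymmetric)
    (hn : Module.finrank 𝕜 E = n) {c : ℝ}
    (h : ∀ x, re (inner 𝕜 (S x) x) + c * ‖x‖ ^ 2 ≤ re (inner 𝕜 (T x) x)) (k : Fin n) :
    hS.eigenvalues hn k + c ≤ hT.eigenvalues hn k := by
  set s : Finset E := (Finset.Ioi k).image (hS.eigenvectorBasis hn) ∪
    (Finset.Iio k).image (hT.eigenvectorBasis hn)
  have hs : s.card < Module.finrank 𝕜 E := by
    calc s.card ≤ (Finset.Ioi k).card + (Finset.Iio k).card :=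
          (Finset.card_union_le _ _).trans (add_le_add Finset.card_image_le Finset.card_image_le)
      _ < Module.finrank 𝕜 E := by rw [Fin.card_Ioi, Fin.card_Iio, hn]; omega
  obtain ⟨x, hx0, hx⟩ := exists_ne_zero_forall_inner_eq_zero_of_card_lt s hs
  have hSx : hS.eigenvalues hn k * ‖x‖ ^ 2 ≤ re (inner 𝕜 (S x) x) :=
    hS.le_re_inner_apply_self_of_forall_gt hn fun i hi =>
      hx _ (Finset.mem_union_left _ (Finset.mem_image_of_mem _ (Finset.mem_Ioi.mpr hi)))
  have hTx : re (inner 𝕜 (T x) x) ≤ hT.eigenvalues hn k * ‖x‖ ^ 2 :=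
    hT.re_inner_apply_self_le_of_forall_lt hn fun i hi =>
      hx _ (Finset.mem_union_right _ (Finset.mem_image_of_mem _ (Finset.mem_Iio.mpr hi)))
  have hx2 : 0 < ‖x‖ ^ 2 := by positivity
  nlinarith [h x]

end LinearMap.IsSymmetric

section kthEig

variable {V : Type*} [Fintype V] [DecidableEq V]

lemma kthEig_succ_eq_eigenvalues₀ {M : Matrix V V ℝ} (hM : M.IsHermitian)
    (k : Fin (Fintype.card V)) : kthEig M (k + 1) = hM.eigenvalues₀ k := by
  -- `kthEig` sorts the eigenvalues increasingly and reads them from the top, while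
  -- `eigenvalues₀` is already sorted decreasingly.
  have hsort : hM.eigenvalues₀ ∘ Fin.revPerm = hM.eigenvalues₀ ∘ Tuple.sort hM.eigenvalues₀ :=
    Tuple.comp_sort_eq_comp_iff_monotone.mpr (hM.eigenvalues₀_antitone.comp Fin.rev_anti)
  have hperm : hM.eigenvalues ∘ (Fintype.equivFin V).symm =
      hM.eigenvalues₀ ∘ ((Fintype.equivFin V).symm.trans
        (Fintype.equivOfCardEq (Fintype.card_fin _)).symm) := rfl
  unfold kthEig
  rw [dif_pos hM, dif_pos (by simp), hperm, Tuple.comp_perm_comp_sort_eq_comp_sort, ← hsort]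
  simp

lemma kthEig_succ_eq_zero_of_card_le (M : Matrix V V ℝ) {k : ℕ} (hk : Fintype.card V ≤ k) :
    kthEig M (k + 1) = 0 := by
  unfold kthEig
  split_ifs <;> first | rfl | omega

theorem kthEig_add_le_kthEig {A B : Matrix V V ℝ} (hA : A.IsHermitian) (hB : B.IsHermitian)
    {c : ℝ} (h : ∀ x : V → ℝ, x ⬝ᵥ (A *ᵥ x) + c * (x ⬝ᵥ x) ≤ x ⬝ᵥ (B *ᵥ x))
    (k : Fin (Fintype.card V)) :
    kthEig A (k + 1) + c ≤ kthEig B (k + 1) := by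
  rw [kthEig_succ_eq_eigenvalues₀ hA, kthEig_succ_eq_eigenvalues₀ hB]
  refine LinearMap.IsSymmetric.eigenvalues_add_le_eigenvalues _ _ finrank_euclideanSpace
    (fun x => ?_) k
  rw [← real_inner_self_eq_norm_sq]
  -- the inner product of `EuclideanSpace ℝ V` is definitionally the dot product
  exact h x.ofLp

end kthEig

namespace SimpleGraph

variable {V : Type*} [Fintype V] [DecidableEq V] (G : SimpleGraph V) [DecidableRel G.Adj]

lemma isHermitian_signlessLap : (signlessLap G).IsHermitian :=
  (G.isHermitian_degMatrix ℝ).add (G.isHermitian_adjMatrix ℝ)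

lemma dotProduct_signlessLap_mulVec (x : V → ℝ) :
    x ⬝ᵥ (signlessLap G *ᵥ x) = x ⬝ᵥ (G.degMatrix ℝ *ᵥ x) + x ⬝ᵥ (G.adjMatrix ℝ *ᵥ x) := by
  rw [signlessLap, add_mulVec, dotProduct_add]

lemma minDegree_mul_dotProduct_self_le (x : V → ℝ) :
    G.minDegree * (x ⬝ᵥ x) ≤ x ⬝ᵥ (G.degMatrix ℝ *ᵥ x) := by
  rw [dotProduct_mulVec_degMatrix, dotProduct, Finset.mul_sum]
  refine Finset.sum_le_sum fun v _ => ?_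
  rw [mul_assoc]
  exact mul_le_mul_of_nonneg_right (by exact_mod_cast G.minDegree_le_degree v)
    (mul_self_nonneg _)

end SimpleGraph

/-- For every graph `G`, `q₂(G) ≥ λ₂(G) + δ(G)`, where `λ₂(G)` is the second largest
adjacency eigenvalue and `δ(G)` the minimum degree. -/
theorem q2_ge_lambda2_add_minDegree (n : ℕ) (G : SimpleGraph (Fin n))
    [DecidableRel G.Adj] :
    kthEig (G.adjMatrix ℝ) 2 + (G.minDegree : ℝ) ≤ qEig G 2 := by
  rcases le_or_gt n 1 with hn | hn
  · have : Subsingleton (Fin n) := Fin.subsingleton_iff_le_one.mpr hn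
    have hcard : Fintype.card (Fin n) ≤ 1 := by simpa using hn
    rw [G.minDegree_of_subsingleton, qEig, kthEig_succ_eq_zero_of_card_le _ hcard,
      kthEig_succ_eq_zero_of_card_le _ hcard]
    simp
  · refine kthEig_add_le_kthEig (G.isHermitian_adjMatrix ℝ) G.isHermitian_signlessLap
      (fun x => ?_) ⟨1, by simpa using hn⟩
    rw [G.dotProduct_signlessLap_mulVec]
    linarith [G.minDegree_mul_dotProduct_self_le x]
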